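/- arXiv:0812.4965 — 5 statements merged into one kernel-verified Lean document; each statement's English description precedes it below -/
import Mathlib

section
/- For every natural number x ≥ 1, log(x!) = Σ_{n ≤ x} ψ(x/n), where ψ is the Chebyshev psi function. -/
noncomputable def psi (x : ℝ) : ℝ :=
  ∑ n ∈ Finset.Icc 1 ⌊x⌋₊, ArithmeticFunction.vonMangoldt n

/-! Since `log = ζ * Λ`, summing `log m` over `m ≤ x` and grouping the terms of the
convolution by the factor `n` carrying `ζ` gives `∑_{n ≤ x} ∑_{k ≤ x/n} Λ k = ∑_{n ≤ x} ψ(x/n)`. -/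

open Finset ArithmeticFunction
open scoped ArithmeticFunction.zeta

theorem psi_natCast_div (x n : ℕ) : psi ((x : ℝ) / n) = ∑ k ∈ Ioc 0 (x / n), Λ k := by
  rw [psi, Nat.floor_div_eq_div, ← Icc_add_one_left_eq_Ioc, zero_add]

theorem Real.log_factorial (n : ℕ) : Real.log n.factorial = ∑ m ∈ Ioc 0 n, Real.log m := by
  induction n with
  | zero => simp
  | succ n ih =>
    rw [sum_Ioc_succ_top n.zero_le, ← ih, Nat.factorial_succ, Nat.cast_mul,
      Real.log_mul (by positivity) (by positivity), add_comm]

theorem log_factorial_eq_sum_psi_general (x : ℕ) :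
    Real.log (Nat.factorial x : ℝ) = ∑ n ∈ Finset.Icc 1 x, psi ((x : ℝ) / n) := by
  calc Real.log x.factorial = ∑ m ∈ Ioc 0 x, ((ζ : ArithmeticFunction ℝ) * Λ) m := by
        simp only [zeta_mul_vonMangoldt, log_apply, Real.log_factorial]
    _ = ∑ n ∈ Ioc 0 x, psi ((x : ℝ) / n) := by
        rw [sum_Ioc_mul_eq_sum_sum]
        refine sum_congr rfl fun n hn => ?_
        rw [natCoe_apply, zeta_apply_ne (mem_Ioc.1 hn).1.ne', Nat.cast_one, one_mul,
          psi_natCast_div]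
    _ = ∑ n ∈ Icc 1 x, psi ((x : ℝ) / n) := by rw [← Icc_add_one_left_eq_Ioc, zero_add]

theorem log_factorial_eq_sum_psi (x : ℕ) (hx : 1 ≤ x) :
    Real.log (Nat.factorial x : ℝ) = ∑ n ∈ Finset.Icc 1 x, psi ((x : ℝ) / n) :=
  log_factorial_eq_sum_psi_general x
end

section
/- There exist positive constants a and b such that for all sufficiently large x, a·x < θ(x) < b·x, where θ is the Chebyshev theta function. -/
/-!
Upper bound: `θ x = log (primorial ⌊x⌋₊)` and the primorial of `n` is at most `4 ^ n`.
Lower bound: `ψ x ≥ (x - 1) log 2 - log (x + 2)` because `lcm(1, …, n) ≥ 2 ^ n / (n + 1)`, and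
prime powers `p ^ k` with `k ≥ 2` contribute at most `2 √x log x` to `ψ x - θ x`; all the error
terms are `o(x)`.
-/

noncomputable def theta (x : ℝ) : ℝ :=
  ∑ p ∈ (Finset.Icc 1 ⌊x⌋₊).filter Nat.Prime, Real.log p

open Filter Asymptotics Real
open scoped Chebyshev

theorem theta_eq_chebyshev_theta : theta = θ := by
  ext x
  rw [theta, Chebyshev.theta, ← Finset.Icc_add_one_left_eq_Ioc, zero_add]

theorem isLittleO_sqrt_mul_log_atTop : (fun x ↦ √x * log x) =o[atTop] id := by
  have h := (isBigO_refl sqrt atTop).mul_isLittleO (isLittleO_log_rpow_atTop one_half_pos)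
  refine h.congr' .rfl ?_
  filter_upwards [eventually_ge_atTop 0] with x hx
  rw [← sqrt_eq_rpow, mul_self_sqrt hx, id]

theorem isLittleO_log_add_const_atTop (c : ℝ) : (fun x ↦ log (x + c)) =o[atTop] id :=
  (isLittleO_log_id_atTop.comp_tendsto (tendsto_atTop_add_const_right _ c tendsto_id)).trans_isBigO
    ((isBigO_refl _ _).add_isLittleO (isLittleO_const_id_atTop c))

namespace Chebyshev

theorem theta_lt_two_mul_log4_mul_x {x : ℝ} (hx : 0 < x) : θ x < 2 * log 4 * x := by
  have hlog4 : 0 < log 4 := log_pos (by norm_num)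
  calc θ x ≤ log 4 * x := theta_le_log4_mul_x hx.le
    _ < 2 * log 4 * x := by nlinarith

theorem eventually_log2_div_three_mul_x_lt_theta : ∀ᶠ x in atTop, log 2 / 3 * x < θ x := by
  have hlog2 : 0 < log 2 := log_pos one_lt_two
  have herr : (fun x ↦ log 2 + log (x + 2) + 2 * √x * log x) =o[atTop] id :=
    ((isLittleO_const_id_atTop _).add (isLittleO_log_add_const_atTop 2)).add
      (by simpa only [mul_assoc] using isLittleO_sqrt_mul_log_atTop.const_mul_left 2)
  filter_upwards [herr.bound (half_pos hlog2), eventually_ge_atTop 1] with x hsmall hx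
  rw [id, norm_of_nonneg (by linarith : 0 ≤ x)] at hsmall
  nlinarith [theta_ge' hx, le_norm_self (log 2 + log (x + 2) + 2 * √x * log x)]

end Chebyshev

theorem chebyshev_theta_order :
    ∃ a > (0 : ℝ), ∃ b > (0 : ℝ), ∃ x₀ : ℝ, ∀ x ≥ x₀,
      a * x < theta x ∧ theta x < b * x := by
  have hupper : ∀ᶠ x in atTop, θ x < 2 * log 4 * x :=
    (eventually_gt_atTop 0).mono fun _ ↦ Chebyshev.theta_lt_two_mul_log4_mul_x
  obtain ⟨x₀, hx₀⟩ :=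
    eventually_atTop.1 (Chebyshev.eventually_log2_div_three_mul_x_lt_theta.and hupper)
  rw [theta_eq_chebyshev_theta]
  exact ⟨log 2 / 3, by positivity, 2 * log 4, by positivity, x₀, hx₀⟩
end

section
/- For real s with 0 < s < 1, the alternating series Σ_{n≥1} (−1)^{n−1} n^{−s} is strictly positive; consequently ζ(s) = (1 − 2^{1−s})^{−1} Σ_{n≥1} (−1)^{n−1} n^{−s} has no real zeros in the open interval (0,1). -/
open Complex Filter Finset

noncomputable def etaPair (m : ℕ) (z : ℂ) : ℂ :=
  ((2 * m + 1 : ℝ) : ℂ) ^ (-z) - ((2 * m + 2 : ℝ) : ℂ) ^ (-z)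

lemma etaPair_bound {z : ℂ} (hz : 0 < z.re) (m : ℕ) :
    ‖etaPair m z‖ ≤ ‖z‖ * (2 * (m : ℝ) + 1) ^ (-z.re - 1) := by
  have hz0 : z ≠ 0 := fun h => by simp [h] at hz
  set a : ℝ := 2 * m + 1 with ha
  set b : ℝ := 2 * m + 2 with hb
  have ha0 : (0:ℝ) < a := by positivity
  have hab : a ≤ b := by simp [ha, hb]
  have hkey : etaPair m z = z * ∫ t in a..b, ((t : ℝ) : ℂ) ^ (-z - 1) := by
    rw [integral_cpow (Or.inr ⟨by
        intro h
        have := congrArg Complex.re h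
        simp at this; linarith,
      Set.notMem_uIcc_of_lt ha0 (lt_of_lt_of_le ha0 hab)⟩)]
    have h1 : -z - 1 + 1 = -z := by ring
    rw [h1, etaPair]
    generalize ((a:ℝ):ℂ) ^ (-z) = A
    generalize ((b:ℝ):ℂ) ^ (-z) = B
    field_simp
    ring
  rw [hkey, norm_mul]
  have hint : ‖∫ t in a..b, ((t : ℝ) : ℂ) ^ (-z - 1)‖ ≤ a ^ (-z.re - 1) * |b - a| := by
    apply intervalIntegral.norm_integral_le_of_norm_le_const
    intro x hx
    rw [Set.uIoc_of_le hab] at hx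
    have hx0 : 0 < x := lt_trans ha0 hx.1
    rw [Complex.norm_cpow_eq_rpow_re_of_pos hx0]
    have : (-z - 1).re = -z.re - 1 := by simp
    rw [this]
    exact Real.rpow_le_rpow_of_nonpos ha0 hx.1.le (by linarith)
  have hba : |b - a| = 1 := by rw [hb, ha]; norm_num
  rw [hba, mul_one] at hint
  calc ‖z‖ * ‖∫ t in a..b, ((t : ℝ) : ℂ) ^ (-z - 1)‖ ≤ ‖z‖ * (a ^ (-z.re - 1)) :=
        mul_le_mul_of_nonneg_left hint (norm_nonneg _)
    _ = ‖z‖ * (2 * (m : ℝ) + 1) ^ (-z.re - 1) := by rw [ha]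

lemma summable_maj {σ : ℝ} (hσ : 0 < σ) (R : ℝ) :
    Summable (fun m : ℕ => R * (2 * (m : ℝ) + 1) ^ (-σ - 1)) := by
  apply Summable.mul_left
  have h1 : Summable (fun m : ℕ => ((m : ℝ) + 1) ^ (-σ - 1)) := by
    have := (Real.summable_nat_rpow (p := -σ - 1)).mpr (by linarith)
    have h2 := (summable_nat_add_iff 1).mpr this
    simpa using h2
  apply Summable.of_nonneg_of_le (fun m => Real.rpow_nonneg (by positivity) _) _ h1
  intro m
  apply Real.rpow_le_rpow_of_nonpos (by positivity) (by linarith [Nat.cast_nonneg (α := ℝ) m]) (by linarith)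

noncomputable def etaFun (z : ℂ) : ℂ := ∑' m, etaPair m z

lemma etaPair_summable {z : ℂ} (hz : 0 < z.re) : Summable (fun m => etaPair m z) :=
  Summable.of_norm_bounded (summable_maj hz ‖z‖) (etaPair_bound hz)

lemma etaPair_differentiable (m : ℕ) : Differentiable ℂ (etaPair m) := by
  unfold etaPair
  have h1 : ((2 * (m:ℝ) + 1 : ℝ) : ℂ) ≠ 0 := by
    simp only [ne_eq, ofReal_eq_zero]; positivity
  have h2 : ((2 * (m:ℝ) + 2 : ℝ) : ℂ) ≠ 0 := by
    simp only [ne_eq, ofReal_eq_zero]; positivity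
  exact ((differentiable_id.neg).const_cpow (Or.inl h1)).sub
    ((differentiable_id.neg).const_cpow (Or.inl h2))

lemma etaFun_analyticAt {z₀ : ℂ} (hz₀ : 0 < z₀.re) : AnalyticAt ℂ etaFun z₀ := by
  set σ : ℝ := z₀.re / 2 with hσdef
  have hσ : 0 < σ := by positivity
  set R : ℝ := ‖z₀‖ + 1 with hRdef
  set V : Set ℂ := {z : ℂ | σ < z.re} ∩ Metric.ball 0 R with hVdef
  have hVo : IsOpen V := ((continuous_re.isOpen_preimage _ isOpen_Ioi)).inter Metric.isOpen_ball
  have hz₀V : z₀ ∈ V := by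
    constructor
    · show σ < z₀.re; rw [hσdef]; linarith
    · simp only [Metric.mem_ball, dist_zero_right]; rw [hRdef]; linarith
  have hbound : ∀ (m : ℕ), ∀ z ∈ V, ‖etaPair m z‖ ≤ R * (2 * (m:ℝ) + 1) ^ (-σ - 1) := by
    intro m z hz
    obtain ⟨hz1, hz2⟩ := hz
    have hz1' : σ < z.re := hz1
    have hzre : 0 < z.re := lt_trans hσ hz1'
    refine (etaPair_bound hzre m).trans ?_
    have hb1 : (1:ℝ) ≤ 2 * (m:ℝ) + 1 := by
      have := Nat.cast_nonneg (α := ℝ) m; linarith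
    have h1 : (2 * (m:ℝ) + 1) ^ (-z.re - 1) ≤ (2 * (m:ℝ) + 1) ^ (-σ - 1) :=
      Real.rpow_le_rpow_of_exponent_le hb1 (by linarith)
    have h2 : ‖z‖ ≤ R := by
      rw [Metric.mem_ball, dist_zero_right] at hz2; linarith
    exact mul_le_mul h2 h1 (Real.rpow_nonneg (by positivity) _) (by rw [hRdef]; positivity)
  have hTU : TendstoUniformlyOn (fun (t : Finset ℕ) z => ∑ m ∈ t, etaPair m z) etaFun
      Filter.atTop V := tendstoUniformlyOn_tsum (summable_maj hσ R) hbound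
  have hdiff : DifferentiableOn ℂ etaFun V := by
    apply hTU.tendstoLocallyUniformlyOn.differentiableOn ?_ hVo
    filter_upwards with t
    exact (Differentiable.fun_sum (fun m _ => etaPair_differentiable m)).differentiableOn
  exact hdiff.analyticAt (hVo.mem_nhds hz₀V)

noncomputable def etaChar : ZMod 2 → ℂ := fun j => if j = 0 then -1 else 1

lemma etaChar_sum : ∑ j, etaChar j = 0 := by
  have : (Finset.univ : Finset (ZMod 2)) = {0, 1} := by decide
  rw [this]
  norm_num [etaChar]

lemma etaChar_natCast (n : ℕ) : etaChar ((n + 1 : ℕ) : ZMod 2) = (-1) ^ n := by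
  rcases Nat.even_or_odd n with he | ho
  · have h2 : ¬ ((2:ℕ) ∣ (n+1)) := by
      rcases he with ⟨k, hk⟩; omega
    have h3 : ((n + 1 : ℕ) : ZMod 2) ≠ 0 := by
      rw [ne_eq, ZMod.natCast_eq_zero_iff]; exact h2
    rw [etaChar]; simp only [if_neg h3, he.neg_one_pow]
  · have h2 : (2:ℕ) ∣ (n+1) := by rcases ho with ⟨k, hk⟩; omega
    have h3 : ((n + 1 : ℕ) : ZMod 2) = 0 := by
      rw [ZMod.natCast_eq_zero_iff]; exact h2
    rw [etaChar]; simp only [if_pos h3, ho.neg_one_pow]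

lemma hasSum_zeta_shift {z : ℂ} (hz : 1 < z.re) :
    HasSum (fun n : ℕ => (((n : ℝ) + 1 : ℝ) : ℂ) ^ (-z)) (riemannZeta z) := by
  have hsum : Summable (fun n : ℕ => 1 / ((n : ℂ) + 1) ^ z) := by
    have := (Complex.summable_one_div_nat_cpow (p := z)).mpr hz
    have h2 := (summable_nat_add_iff 1).mpr this
    simpa using h2
  have h3 := hsum.hasSum
  rw [← zeta_eq_tsum_one_div_nat_add_one_cpow hz] at h3
  refine h3.congr_fun fun n => ?_
  rw [cpow_neg, one_div]
  push_cast
  ring_nf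

lemma hasSum_alt {z : ℂ} (hz : 1 < z.re) :
    HasSum (fun n : ℕ => (-1) ^ n * (((n : ℝ) + 1 : ℝ) : ℂ) ^ (-z))
      ((1 - 2 ^ (1 - z)) * riemannZeta z) := by
  have hζ := hasSum_zeta_shift hz
  have heven : HasSum (fun m : ℕ => ((2 * (m : ℝ) + 2 : ℝ) : ℂ) ^ (-z))
      ((2:ℂ) ^ (-z) * riemannZeta z) := by
    refine (hζ.mul_left ((2:ℂ) ^ (-z))).congr_fun fun m => ?_
    have : ((2 * (m:ℝ) + 2 : ℝ) : ℂ) = ((2:ℝ) : ℂ) * (((m:ℝ) + 1 : ℝ) : ℂ) := by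
      push_cast; ring
    rw [this, mul_cpow_ofReal_nonneg (by norm_num) (by positivity)]
    norm_num
  set e : ℕ → ℂ := fun n => if Odd n then (((n:ℝ) + 1 : ℝ) : ℂ) ^ (-z) else 0 with he
  have hodd : HasSum e ((2:ℂ) ^ (-z) * riemannZeta z) := by
    have hi : Function.Injective (fun m : ℕ => 2 * m + 1) := fun a b h => by
      simp only at h; omega
    have h0 : ∀ x ∉ Set.range (fun m : ℕ => 2 * m + 1), e x = 0 := by
      intro x hx
      have hox : ¬ Odd x := fun hox => hx ⟨x / 2, by obtain ⟨k, hk⟩ := hox; simp; omega⟩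
      simp [he, hox]
    rw [← hi.hasSum_iff h0]
    refine heven.congr_fun fun m => ?_
    show e (2 * m + 1) = ((2 * (m:ℝ) + 2 : ℝ) : ℂ) ^ (-z)
    simp only [he, odd_two_mul_add_one, if_pos]
    congr 2
    push_cast
    ring
  have hfinal := hζ.sub (hodd.mul_left 2)
  have heq : riemannZeta z - 2 * ((2:ℂ) ^ (-z) * riemannZeta z)
      = (1 - 2 ^ (1 - z)) * riemannZeta z := by
    have h2 : (2:ℂ) ^ (1 - z) = 2 * 2 ^ (-z) := by
      rw [show (1:ℂ) - z = 1 + -z by ring, cpow_add _ _ two_ne_zero, cpow_one]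
    rw [h2]; ring
  rw [heq] at hfinal
  refine hfinal.congr_fun fun n => ?_
  rcases Nat.even_or_odd n with hn | hn
  · have hno : ¬ Odd n := Nat.not_odd_iff_even.mpr hn
    simp only [he, if_neg hno, hn.neg_one_pow]
    ring
  · simp only [he, if_pos hn, hn.neg_one_pow]
    ring

lemma LFunction_eta_eq_of_one_lt {z : ℂ} (hz : 1 < z.re) :
    ZMod.LFunction etaChar z = (1 - 2 ^ (1 - z)) * riemannZeta z := by
  rw [ZMod.LFunction_eq_LSeries _ hz]
  have hterm : HasSum (LSeries.term (fun n : ℕ => etaChar n) z)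
      ((1 - 2 ^ (1 - z)) * riemannZeta z + ∑ i ∈ Finset.range 1,
        LSeries.term (fun n : ℕ => etaChar n) z i) := by
    rw [← hasSum_nat_add_iff 1]
    refine (hasSum_alt hz).congr_fun fun n => ?_
    rw [LSeries.term_of_ne_zero (by omega : n + 1 ≠ 0)]
    rw [etaChar_natCast n, cpow_neg]
    push_cast
    rw [div_eq_mul_inv]
  simp only [Finset.range_one, Finset.sum_singleton, LSeries.term_zero, add_zero] at hterm
  exact hterm.tsum_eq

lemma LFunction_eta_eq {z : ℂ} (hz : z ≠ 1) :
    ZMod.LFunction etaChar z = (1 - 2 ^ (1 - z)) * riemannZeta z := by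
  set U : Set ℂ := {1}ᶜ with hU
  have hUo : IsOpen U := isOpen_compl_singleton
  have hf : AnalyticOnNhd ℂ (ZMod.LFunction etaChar) U := fun u _ =>
    (ZMod.differentiable_LFunction_of_sum_zero etaChar_sum).analyticAt u
  have hg : AnalyticOnNhd ℂ (fun w => (1 - 2 ^ (1 - w)) * riemannZeta w) U := by
    refine DifferentiableOn.analyticOnNhd (fun u hu => ?_) hUo
    refine DifferentiableAt.differentiableWithinAt ?_
    refine DifferentiableAt.mul ?_ (differentiableAt_riemannZeta hu)
    exact (differentiableAt_const _).sub
      (((differentiableAt_const _).sub differentiableAt_id).const_cpow (Or.inl two_ne_zero))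
  have hUc : IsPreconnected U :=
    (isConnected_compl_singleton_of_one_lt_rank (by simp) (1 : ℂ)).isPreconnected
  have h2U : (2 : ℂ) ∈ U := by
    simp only [hU, Set.mem_compl_iff, Set.mem_singleton_iff]
    norm_num
  refine hf.eqOn_of_preconnected_of_eventuallyEq hg hUc h2U ?_ hz
  have hV : {w : ℂ | 1 < w.re} ∈ nhds (2 : ℂ) :=
    (continuous_re.isOpen_preimage _ isOpen_Ioi).mem_nhds (by norm_num)
  filter_upwards [hV] with w hw using LFunction_eta_eq_of_one_lt hw


lemma hasSum_etaPair_of_one_lt {w : ℂ} (hw : 1 < w.re) :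
    HasSum (fun m => etaPair m w) ((1 - 2 ^ (1 - w)) * riemannZeta w) := by
  set F : ℕ → ℂ := fun n => (-1) ^ n * (((n : ℝ) + 1 : ℝ) : ℂ) ^ (-w) with hFdef
  have hF : HasSum F ((1 - 2 ^ (1 - w)) * riemannZeta w) := hasSum_alt hw
  have h1 : Summable (fun m : ℕ => F (2 * m)) :=
    hF.summable.comp_injective (fun a b h => by omega)
  have h2 : Summable (fun m : ℕ => F (2 * m + 1)) :=
    hF.summable.comp_injective (fun a b h => by omega)
  have h3 : HasSum F ((∑' m, F (2 * m)) + ∑' m, F (2 * m + 1)) :=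
    HasSum.even_add_odd h1.hasSum h2.hasSum
  have h4 := hF.unique h3
  rw [h4]
  refine (h1.hasSum.add h2.hasSum).congr_fun fun m => ?_
  have he : F (2 * m) = ((2 * (m : ℝ) + 1 : ℝ) : ℂ) ^ (-w) := by
    show (-1 : ℂ) ^ (2 * m) * ((((2 * m : ℕ) : ℝ) + 1 : ℝ) : ℂ) ^ (-w) = _
    rw [Even.neg_one_pow ⟨m, two_mul m⟩, one_mul,
      show (((2 * m : ℕ) : ℝ) + 1 : ℝ) = (2 * (m : ℝ) + 1 : ℝ) from by push_cast; ring]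
  have ho : F (2 * m + 1) = -(((2 * (m : ℝ) + 2 : ℝ) : ℂ) ^ (-w)) := by
    show (-1 : ℂ) ^ (2 * m + 1) * ((((2 * m + 1 : ℕ) : ℝ) + 1 : ℝ) : ℂ) ^ (-w) = _
    rw [Odd.neg_one_pow ⟨m, rfl⟩, neg_one_mul,
      show (((2 * m + 1 : ℕ) : ℝ) + 1 : ℝ) = (2 * (m : ℝ) + 2 : ℝ) from by push_cast; ring]
  rw [etaPair, he, ho]
  ring

lemma etaFun_eq_LFunction {z : ℂ} (hz : 0 < z.re) :
    etaFun z = ZMod.LFunction etaChar z := by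
  set U : Set ℂ := {w : ℂ | 0 < w.re} with hU
  have hUo : IsOpen U := continuous_re.isOpen_preimage _ isOpen_Ioi
  have hf : AnalyticOnNhd ℂ etaFun U := fun u hu => etaFun_analyticAt hu
  have hg : AnalyticOnNhd ℂ (ZMod.LFunction etaChar) U := fun u _ =>
    (ZMod.differentiable_LFunction_of_sum_zero etaChar_sum).analyticAt u
  have hUc : IsPreconnected U := (convex_halfSpace_re_gt 0).isPreconnected
  have h2U : (2 : ℂ) ∈ U := by norm_num [hU]
  refine hf.eqOn_of_preconnected_of_eventuallyEq hg hUc h2U ?_ hz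
  have hV : {w : ℂ | 1 < w.re} ∈ nhds (2 : ℂ) :=
    (continuous_re.isOpen_preimage _ isOpen_Ioi).mem_nhds (by norm_num)
  filter_upwards [hV] with w hw
  rw [etaFun, (hasSum_etaPair_of_one_lt hw).tsum_eq, LFunction_eta_eq_of_one_lt hw]

lemma sum_range_two_mul (f : ℕ → ℂ) (M : ℕ) :
    ∑ n ∈ Finset.range (2 * M), f n = ∑ m ∈ Finset.range M, (f (2 * m) + f (2 * m + 1)) := by
  induction M with
  | zero => simp
  | succ M ih =>
    rw [Finset.sum_range_succ, ← ih, show 2 * (M + 1) = 2 * M + 1 + 1 by ring,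
      Finset.sum_range_succ, Finset.sum_range_succ, add_assoc]

lemma sum_range_even_eq (w : ℂ) (M : ℕ) :
    ∑ n ∈ Finset.range (2 * M), (-1 : ℂ) ^ n * (((n : ℝ) + 1 : ℝ) : ℂ) ^ (-w)
      = ∑ m ∈ Finset.range M, etaPair m w := by
  rw [sum_range_two_mul]
  refine Finset.sum_congr rfl fun m _ => ?_
  have he : (-1 : ℂ) ^ (2 * m) * ((((2 * m : ℕ) : ℝ) + 1 : ℝ) : ℂ) ^ (-w)
      = ((2 * (m : ℝ) + 1 : ℝ) : ℂ) ^ (-w) := by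
    rw [Even.neg_one_pow ⟨m, two_mul m⟩, one_mul,
      show (((2 * m : ℕ) : ℝ) + 1 : ℝ) = (2 * (m : ℝ) + 1 : ℝ) from by push_cast; ring]
  have ho : (-1 : ℂ) ^ (2 * m + 1) * ((((2 * m + 1 : ℕ) : ℝ) + 1 : ℝ) : ℂ) ^ (-w)
      = -(((2 * (m : ℝ) + 2 : ℝ) : ℂ) ^ (-w)) := by
    rw [Odd.neg_one_pow ⟨m, rfl⟩, neg_one_mul,
      show (((2 * m + 1 : ℕ) : ℝ) + 1 : ℝ) = (2 * (m : ℝ) + 2 : ℝ) from by push_cast; ring]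
  rw [he, ho, etaPair]
  ring

theorem zeta_no_real_zeros_in_unit_interval (s : ℝ) (h0 : 0 < s) (h1 : s < 1) :
    (∃ L : ℝ, 0 < L ∧
      Filter.Tendsto (fun N : ℕ => ∑ n ∈ Finset.range N, (-1 : ℝ) ^ n * ((n : ℝ) + 1) ^ (-s))
        Filter.atTop (nhds L) ∧
      riemannZeta s = (1 - 2 ^ (1 - (s : ℂ)))⁻¹ * L) ∧
    riemannZeta s ≠ 0 := by
  have hre : ((s : ℂ)).re = s := Complex.ofReal_re s
  set f : ℕ → ℝ := fun n => ((n : ℝ) + 1) ^ (-s) with hf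
  have hanti : Antitone f := by
    intro a b hab
    exact Real.rpow_le_rpow_of_nonpos (by positivity)
      (by have : (a : ℝ) ≤ b := Nat.cast_le.mpr hab; linarith) (by linarith)
  have hf0 : Filter.Tendsto f Filter.atTop (nhds 0) := by
    have h1' : Filter.Tendsto (fun n : ℕ => (n : ℝ) + 1) Filter.atTop Filter.atTop :=
      Filter.tendsto_atTop_add_const_right _ 1 tendsto_natCast_atTop_atTop
    exact (tendsto_rpow_neg_atTop h0).comp h1'
  obtain ⟨L, hL⟩ := hanti.tendsto_alternating_series_of_tendsto_zero hf0
  set S : ℕ → ℝ := fun N => ∑ n ∈ Finset.range N, (-1) ^ n * f n with hS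
  -- monotonicity of even partial sums
  have hmono : Monotone (fun k => S (2 * k)) := by
    apply monotone_nat_of_le_succ
    intro k
    show S (2 * k) ≤ S (2 * (k + 1))
    rw [hS]
    simp only
    rw [show 2 * (k + 1) = 2 * k + 1 + 1 by ring, Finset.sum_range_succ, Finset.sum_range_succ,
      Even.neg_one_pow ⟨k, two_mul k⟩, Odd.neg_one_pow (⟨k, rfl⟩ : Odd (2 * k + 1))]
    have h1' : f (2 * k + 1) ≤ f (2 * k) := hanti (by omega)
    linarith
  have hL2 : Filter.Tendsto (fun k => S (2 * k)) Filter.atTop (nhds L) :=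
    hL.comp (Filter.tendsto_atTop_mono (fun n => by simp only [id_eq]; omega)
      Filter.tendsto_id)
  have hS2 : S 2 = 1 - 2 ^ (-s) := by
    rw [hS]
    simp only
    rw [Finset.sum_range_succ, Finset.sum_range_one]
    have e0 : (-1 : ℝ) ^ 0 * f 0 = 1 := by simp [hf]
    have e1 : (-1 : ℝ) ^ 1 * f 1 = -(2 : ℝ) ^ (-s) := by
      simp only [hf]
      norm_num
    rw [e0, e1]
    ring
  have hpos : 0 < L := by
    have h2 : (2 : ℝ) ^ (-s) < 1 :=
      Real.rpow_lt_one_of_one_lt_of_neg one_lt_two (by linarith)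
    have hle : S 2 ≤ L := by
      refine ge_of_tendsto hL2 (Filter.eventually_atTop.2 ⟨1, fun k hk => ?_⟩)
      have := hmono hk
      simpa using this
    rw [hS2] at hle
    linarith
  -- complex side
  have hzre : 0 < ((s : ℂ)).re := by rw [hre]; exact h0
  have hT : ∀ N, ((S N : ℝ) : ℂ)
      = ∑ n ∈ Finset.range N, (-1 : ℂ) ^ n * (((n : ℝ) + 1 : ℝ) : ℂ) ^ (-(s : ℂ)) := by
    intro N
    rw [hS]
    simp only [hf]
    push_cast
    refine Finset.sum_congr rfl fun n _ => ?_
    rw [Complex.ofReal_cpow (by positivity) (-s)]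
    push_cast
    ring
  have hTL : Filter.Tendsto
      (fun N => ∑ n ∈ Finset.range N, (-1 : ℂ) ^ n * (((n : ℝ) + 1 : ℝ) : ℂ) ^ (-(s : ℂ)))
      Filter.atTop (nhds ((L : ℝ) : ℂ)) := by
    have := (Complex.continuous_ofReal.tendsto L).comp hL
    refine this.congr fun N => ?_
    exact hT N
  have hEta : Filter.Tendsto (fun M => ∑ m ∈ Finset.range M, etaPair m (s : ℂ))
      Filter.atTop (nhds (etaFun s)) := (etaPair_summable hzre).hasSum.tendsto_sum_nat
  have hEL : etaFun s = ((L : ℝ) : ℂ) := by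
    refine tendsto_nhds_unique ?_ (hTL.comp (Filter.tendsto_atTop_mono
      (fun n => by simp only [id_eq]; omega) Filter.tendsto_id :
      Filter.Tendsto (fun M : ℕ => 2 * M) Filter.atTop Filter.atTop))
    refine hEta.congr fun M => ?_
    exact (sum_range_even_eq (s : ℂ) M).symm
  have hs1 : (s : ℂ) ≠ 1 := by
    intro h
    rw [Complex.ofReal_eq_one] at h
    linarith
  have hkey : (1 - 2 ^ (1 - (s : ℂ))) * riemannZeta s = ((L : ℝ) : ℂ) := by
    rw [← LFunction_eta_eq hs1, ← etaFun_eq_LFunction hzre, hEL]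
  have hne : (1 : ℂ) - 2 ^ (1 - (s : ℂ)) ≠ 0 := by
    have hcast : (2 : ℂ) ^ (1 - (s : ℂ)) = (((2 : ℝ) ^ (1 - s) : ℝ) : ℂ) := by
      rw [Complex.ofReal_cpow (by norm_num) (1 - s)]
      push_cast
      ring_nf
    have hgt : 1 < (2 : ℝ) ^ (1 - s) :=
      (Real.one_lt_rpow_iff_of_pos two_pos).mpr (Or.inl ⟨one_lt_two, by linarith⟩)
    rw [hcast, sub_ne_zero]
    intro h
    have : (1 : ℝ) = (2 : ℝ) ^ (1 - s) := by exact_mod_cast h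
    linarith
  have hzeta : riemannZeta s = (1 - 2 ^ (1 - (s : ℂ)))⁻¹ * ((L : ℝ) : ℂ) := by
    rw [← hkey, inv_mul_cancel_left₀ hne]
  refine ⟨⟨L, hpos, hL, hzeta⟩, ?_⟩
  intro h
  rw [h, mul_zero] at hkey
  have hL0 : L = 0 := by exact_mod_cast hkey.symm
  linarith
end

section
/- Let χ be a primitive Dirichlet character modulo q > 1. Then for every real x, |Σ_{1 ≤ n ≤ x} χ(n)| ≤ √q · log q (Pólya–Vinogradov inequality). -/
/-!
Write `e(t) = exp(2πit/q)` and let `τ = ∑ₐ χ(a) e(a)` be the Gauss sum. Since `χ` is primitive,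
`χ̄(n) τ = ∑ₐ χ(a) e(an)` for every `n`, and `|τ| = √q`. Summing over `n` in an interval and
swapping the sums, `√q |∑ χ(n)|` is at most `∑_{a ≠ 0} |∑ₙ e(an)|`. Each inner geometric sum is
at most `1 / sin(π a / q) ≤ q / (2 ‖a‖)`, where `‖a‖ = min(a, q - a)`, by Jordan's inequality.
Finally `∑_{0 < a < q} 1 / ‖a‖ = H_{⌊q/2⌋} + H_{⌊(q-1)/2⌋} ≤ 2 log q`, using the sharp harmonic
bound `H_m ≤ log(2m + 1)`, which follows from `1/k ≤ log(2k + 1) - log(2k - 1)`.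
-/

open Finset Real ZMod

lemma two_div_two_mul_add_one_le_log_one_add_inv {a : ℝ} (ha : 0 < a) :
    2 / (2 * a + 1) ≤ log (1 + a⁻¹) := by
  simpa [div_eq_mul_inv] using le_hasSum (hasSum_log_one_add_inv ha) 0 fun k _ ↦ by positivity

lemma harmonic_le_log_two_mul_add_one (m : ℕ) : (harmonic m : ℝ) ≤ log (2 * m + 1) := by
  induction m with
  | zero => simp
  | succ m ih =>
    have step : ((m + 1 : ℕ) : ℝ)⁻¹ ≤ log (2 * (m + 1 : ℕ) + 1) - log (2 * m + 1) := by
      rw [← log_div (by positivity) (by positivity)]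
      convert two_div_two_mul_add_one_le_log_one_add_inv (a := m + 1 / 2) (by positivity) using 2
      all_goals push_cast; field_simp; ring
    push_cast [harmonic_succ] at step ⊢
    linarith

lemma sum_range_succ_inv_eq_harmonic (m : ℕ) : ∑ b ∈ range (m + 1), (b : ℝ)⁻¹ = harmonic m := by
  rw [sum_range_succ', harmonic]
  push_cast
  simp

-- The term `b = 0` vanishes because `min 0 q = 0` and `0⁻¹ = 0`.
lemma sum_range_inv_min_eq_harmonic_add_harmonic {q : ℕ} (hq : 0 < q) :
    ∑ b ∈ range q, (min (b : ℝ) (q - b))⁻¹ = harmonic (q / 2) + harmonic ((q - 1) / 2) := by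
  rw [← sum_range_add_sum_Ico _ (show q / 2 + 1 ≤ q by omega), ← sum_range_succ_inv_eq_harmonic,
    ← sum_range_succ_inv_eq_harmonic]
  congr 1
  · refine sum_congr rfl fun b hb ↦ ?_
    have : 2 * b ≤ q := by rw [mem_range] at hb; omega
    rw [min_eq_left (by rw [le_sub_iff_add_le, ← two_mul]; exact_mod_cast this)]
  · calc ∑ b ∈ Ico (q / 2 + 1) q, (min (b : ℝ) (q - b))⁻¹
          = ∑ b ∈ Ico (q / 2 + 1) q, ((q - b : ℕ) : ℝ)⁻¹ := by
          refine sum_congr rfl fun b hb ↦ ?_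
          have : q < 2 * b ∧ b < q := by rw [mem_Ico] at hb; omega
          rw [min_eq_right (by rw [sub_le_iff_le_add, ← two_mul]; exact_mod_cast this.1.le),
            Nat.cast_sub this.2.le]
      _ = ∑ b ∈ Ico 1 ((q - 1) / 2 + 1), (b : ℝ)⁻¹ := by
          rw [sum_Ico_reflect (fun b : ℕ ↦ (b : ℝ)⁻¹) _ (Nat.le_succ q)]
          congr 2 <;> omega
      _ = ∑ b ∈ range ((q - 1) / 2 + 1), (b : ℝ)⁻¹ := by
          rw [range_eq_Ico, sum_eq_sum_Ico_succ_bot (Nat.succ_pos _)]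
          simp

lemma sum_range_inv_min_le (q : ℕ) : ∑ b ∈ range q, (min (b : ℝ) (q - b))⁻¹ ≤ 2 * log q := by
  rcases Nat.eq_zero_or_pos q with rfl | hq
  · simp
  have hprod : (2 * (q / 2 : ℕ) + 1 : ℝ) * (2 * ((q - 1) / 2 : ℕ) + 1) ≤ (q : ℝ) ^ 2 := by
    suffices (2 * (q / 2) + 1) * (2 * ((q - 1) / 2) + 1) ≤ q ^ 2 by exact_mod_cast this
    obtain ⟨m, rfl | rfl⟩ := Nat.even_or_odd' q
    · obtain ⟨k, rfl⟩ := Nat.exists_eq_add_one_of_ne_zero (by omega : m ≠ 0)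
      rw [show 2 * (k + 1) / 2 = k + 1 by omega, show (2 * (k + 1) - 1) / 2 = k by omega]
      nlinarith
    · rw [show (2 * m + 1) / 2 = m by omega, show (2 * m + 1 - 1) / 2 = m by omega, sq]
  calc ∑ b ∈ range q, (min (b : ℝ) (q - b))⁻¹
      ≤ log (2 * (q / 2 : ℕ) + 1) + log (2 * ((q - 1) / 2 : ℕ) + 1) := by
        rw [sum_range_inv_min_eq_harmonic_add_harmonic hq]
        gcongr <;> exact harmonic_le_log_two_mul_add_one _
    _ = log ((2 * (q / 2 : ℕ) + 1 : ℝ) * (2 * ((q - 1) / 2 : ℕ) + 1)) := by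
        rw [log_mul (by positivity) (by positivity)]
    _ ≤ log ((q : ℝ) ^ 2) := log_le_log (by positivity) hprod
    _ = 2 * log q := by rw [log_pow]; norm_num

lemma two_mul_min_le_sin_pi_mul {t : ℝ} (h0 : 0 ≤ t) (h1 : t ≤ 1) :
    2 * min t (1 - t) ≤ sin (π * t) := by
  wlog ht : t ≤ 1 / 2 generalizing t
  · have := this (t := 1 - t) (by linarith) (by linarith) (by linarith)
    rwa [sub_sub_cancel, min_comm, mul_sub, mul_one, sin_pi_sub] at this
  rw [min_eq_left (by linarith)]
  have := mul_le_sin (x := π * t) (by positivity) (by nlinarith [pi_pos])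
  rwa [← mul_assoc, div_mul_cancel₀ _ pi_ne_zero] at this

lemma norm_geom_sum_Ico_le {K : Type*} [NormedDivisionRing K] {z : K} (hz : ‖z‖ ≤ 1)
    (hz1 : z ≠ 1) (m n : ℕ) : ‖∑ i ∈ Ico m n, z ^ i‖ ≤ 2 / ‖z - 1‖ := by
  rcases le_or_gt m n with hmn | hnm
  · rw [geom_sum_Ico hz1 hmn, norm_div]
    gcongr
    calc ‖z ^ n - z ^ m‖ ≤ ‖z‖ ^ n + ‖z‖ ^ m := by
          simpa only [norm_pow] using norm_sub_le (z ^ n) (z ^ m)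
      _ ≤ 2 := by linarith [pow_le_one₀ (norm_nonneg z) hz (n := n),
          pow_le_one₀ (norm_nonneg z) hz (n := m)]
  · rw [Ico_eq_empty_of_le hnm.le, sum_empty, norm_zero]
    positivity

namespace ZMod

lemma sum_val_eq_sum_range {M : Type*} [AddCommMonoid M] (q : ℕ) [NeZero q] (g : ℕ → M) :
    ∑ a : ZMod q, g a.val = ∑ b ∈ range q, g b := by
  obtain ⟨n, rfl⟩ := Nat.exists_eq_add_one_of_ne_zero (NeZero.ne q)
  exact (sum_range g).symm

variable {N : ℕ} [NeZero N]

lemma norm_stdAddChar_sub_one (a : ZMod N) : ‖stdAddChar a - 1‖ = 2 * sin (π * a.val / N) := by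
  have hexp : stdAddChar a = Complex.exp (Complex.I * ↑(2 * π * a.val / N)) := by
    conv_lhs => rw [← natCast_zmod_val a, ← Int.cast_natCast, stdAddChar_coe]
    push_cast
    ring_nf
  rw [hexp, Complex.norm_exp_I_mul_ofReal_sub_one,
    show 2 * π * a.val / N / 2 = π * a.val / N by ring, Real.norm_eq_abs, abs_of_nonneg]
  have hv : (a.val : ℝ) ≤ N := by exact_mod_cast (val_lt a).le
  have hN : (0 : ℝ) < N := by exact_mod_cast NeZero.pos N
  refine mul_nonneg zero_le_two (sin_nonneg_of_nonneg_of_le_pi (by positivity) ?_)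
  rw [div_le_iff₀ hN]
  exact mul_le_mul_of_nonneg_left hv pi_pos.le

lemma norm_sum_Ico_stdAddChar_mul_le {a : ZMod N} (ha : a ≠ 0) (m n : ℕ) :
    ‖∑ k ∈ Ico m n, stdAddChar ((k : ZMod N) * a)‖ ≤ N / (2 * min (a.val : ℝ) (N - a.val)) := by
  have hN : (0 : ℝ) < N := by exact_mod_cast NeZero.pos N
  have hv : 0 < min (a.val : ℝ) (N - a.val) :=
    lt_min (by exact_mod_cast val_pos.2 ha) (sub_pos.2 (by exact_mod_cast val_lt a))
  have hsin : 2 * min (a.val : ℝ) (N - a.val) / N ≤ sin (π * a.val / N) := by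
    have h := two_mul_min_le_sin_pi_mul (t := a.val / N) (by positivity)
      ((div_le_one hN).2 (by exact_mod_cast (val_lt a).le))
    rwa [one_sub_div hN.ne', min_div_div_right hN.le, ← mul_div_assoc, ← mul_div_assoc] at h
  have hne : stdAddChar a ≠ 1 := by
    rwa [← (stdAddChar (N := N)).map_zero_eq_one, injective_stdAddChar.ne_iff]
  simp_rw [← nsmul_eq_mul, AddChar.map_nsmul_eq_pow]
  calc ‖∑ k ∈ Ico m n, stdAddChar a ^ k‖
      ≤ 2 / ‖stdAddChar a - 1‖ :=
        norm_geom_sum_Ico_le (stdAddChar_apply a ▸ (Circle.norm_coe _).le) hne m n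
    _ = (sin (π * a.val / N))⁻¹ := by rw [norm_stdAddChar_sub_one]; field_simp
    _ ≤ (2 * min (a.val : ℝ) (N - a.val) / N)⁻¹ := inv_anti₀ (by positivity) hsin
    _ = N / (2 * min (a.val : ℝ) (N - a.val)) := inv_div _ _

end ZMod

namespace DirichletCharacter

variable {N : ℕ} [NeZero N] {χ : DirichletCharacter ℂ N}

-- Fourier inversion `𝓕 (𝓕 χ) (-1) = N χ 1`, where `𝓕 χ = χ⁻¹ (-·) * τ` by primitivity.
lemma IsPrimitive.gaussSum_mul_star (hχ : χ.IsPrimitive) :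
    gaussSum χ stdAddChar * star (gaussSum χ stdAddChar) = N := by
  have h := congr_fun (dft_dft (χ : ZMod N → ℂ)) (-1)
  simp only [funext hχ.fourierTransform_eq_inv_mul_gaussSum, dft_mul_const] at h
  rw [congr_fun (dft_comp_neg ⇑χ⁻¹), fourierTransform_eq_gaussSum_mulShift] at h
  rwa [neg_neg, neg_neg, ← AddChar.inv_mulShift, ← star_gaussSum_eq, map_one, smul_eq_mul,
    mul_one, mul_comm] at h

lemma IsPrimitive.norm_gaussSum (hχ : χ.IsPrimitive) : ‖gaussSum χ stdAddChar‖ = √N := by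
  rw [eq_comm, sqrt_eq_iff_eq_sq (Nat.cast_nonneg N) (norm_nonneg _), ← Complex.normSq_eq_norm_sq,
    ← Complex.ofReal_inj, ← Complex.mul_conj, Complex.ofReal_natCast]
  exact hχ.gaussSum_mul_star.symm

lemma IsPrimitive.star_sum_mul_gaussSum (hχ : χ.IsPrimitive) (s : Finset ℕ) :
    star (∑ n ∈ s, χ n) * gaussSum χ stdAddChar
      = ∑ a, χ a * ∑ n ∈ s, stdAddChar ((n : ZMod N) * a) := by
  simp_rw [star_sum, MulChar.star_apply', sum_mul, ← gaussSum_mulShift_of_isPrimitive _ hχ,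
    gaussSum, AddChar.mulShift_apply, mul_sum]
  exact sum_comm

lemma IsPrimitive.norm_sum_Ico_le (hN : 1 < N) (hχ : χ.IsPrimitive) (m n : ℕ) :
    ‖∑ k ∈ Ico m n, χ k‖ ≤ √N * log N := by
  have : Fact (1 < N) := ⟨hN⟩
  have hsqrt : 0 < √(N : ℝ) := sqrt_pos.2 (by exact_mod_cast NeZero.pos N)
  refine le_of_mul_le_mul_right ?_ hsqrt
  calc ‖∑ k ∈ Ico m n, χ k‖ * √N
      = ‖∑ a, χ a * ∑ k ∈ Ico m n, stdAddChar ((k : ZMod N) * a)‖ := by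
        rw [← hχ.star_sum_mul_gaussSum, norm_mul, norm_star, hχ.norm_gaussSum]
    _ ≤ ∑ a : ZMod N, N / (2 * min (a.val : ℝ) (N - a.val)) := by
        refine (norm_sum_le _ _).trans (sum_le_sum fun a _ ↦ ?_)
        rcases eq_or_ne a 0 with rfl | ha
        · simp [χ.map_zero]
        · rw [norm_mul]
          exact (mul_le_of_le_one_left (norm_nonneg _) (χ.norm_le_one a)).trans
            (norm_sum_Ico_stdAddChar_mul_le ha m n)
    _ = N / 2 * ∑ b ∈ range N, (min (b : ℝ) (N - b))⁻¹ := by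
        rw [sum_val_eq_sum_range N (fun b ↦ N / (2 * min (b : ℝ) (N - b))), mul_sum]
        simp_rw [div_mul_eq_div_div, div_eq_mul_inv]
    _ ≤ N / 2 * (2 * log N) := by gcongr; exact sum_range_inv_min_le N
    _ = √N * log N * √N := by rw [mul_right_comm, mul_self_sqrt (Nat.cast_nonneg N)]; ring

end DirichletCharacter

theorem polya_vinogradov (q : ℕ) (hq : 1 < q) (χ : DirichletCharacter ℂ q)
    (hχ : χ.IsPrimitive) (x : ℝ) :
    ‖∑ n ∈ Finset.Icc 1 ⌊x⌋₊, χ (n : ZMod q)‖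
      ≤ Real.sqrt q * Real.log q := by
  have : NeZero q := ⟨by omega⟩
  rw [← Ico_add_one_right_eq_Icc]
  exact hχ.norm_sum_Ico_le hq 1 (⌊x⌋₊ + 1)
end

section
/- If π(x) ~ x/log x as x → ∞ (the prime number theorem), then the n-th prime p_n satisfies p_n ~ n·log n as n → ∞. -/
open Filter Real Asymptotics

/-! If `m ~ v / log v` with `v → ∞`, then `log m ~ log v`, because `log log v = o(log v)`;
multiplying the two equivalences gives `m log m ~ v`. Since `π(p_n) = n`, the prime number
theorem at `x = p_n` says exactly `n ~ p_n / log p_n`. -/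

lemma Real.tendsto_div_log_atTop : Tendsto (fun x : ℝ => x / log x) atTop atTop := by
  refine ((tendsto_exp_div_pow_atTop 1).comp tendsto_log_atTop).congr' ?_
  filter_upwards [eventually_gt_atTop 0] with x hx
  simp [exp_log hx]

lemma Asymptotics.isEquivalent_log_div_log {α : Type*} {l : Filter α} {v : α → ℝ}
    (hv : Tendsto v l atTop) :
    (fun x => log (v x / log (v x))) ~[l] fun x => log (v x) := by
  have hlogv : Tendsto (fun x => log (v x)) l atTop := tendsto_log_atTop.comp hv
  refine (IsEquivalent.refl.sub_isLittleO
    (isLittleO_log_id_atTop.comp_tendsto hlogv)).congr_left ?_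
  filter_upwards [hv.eventually_ne_atTop 0, hlogv.eventually_ne_atTop 0] with x hv0 hlogv0
  exact (log_div hv0 hlogv0).symm

lemma Asymptotics.IsEquivalent.mul_log_of_div_log {α : Type*} {l : Filter α} {u v : α → ℝ}
    (hv : Tendsto v l atTop) (huv : u ~[l] fun x => v x / Real.log (v x)) :
    v ~[l] fun x => u x * Real.log (u x) := by
  have hlog : (fun x => Real.log (u x)) ~[l] fun x => Real.log (v x) :=
    (huv.log (tendsto_div_log_atTop.comp hv)).trans (isEquivalent_log_div_log hv)
  refine ((huv.mul hlog).congr_right ?_).symm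
  filter_upwards [(tendsto_log_atTop.comp hv).eventually_ne_atTop 0] with x hlogv0
  exact div_mul_cancel₀ (v x) hlogv0

lemma Nat.primeCounting_nth_prime (n : ℕ) : Nat.primeCounting (Nat.nth Nat.Prime n) = n + 1 :=
  Nat.count_nth_succ_of_infinite Nat.infinite_setOfPred_prime n

theorem pnt_implies_nth_prime_asymp
    (h : Filter.Tendsto (fun x : ℝ => (Nat.primeCounting ⌊x⌋₊ : ℝ) / (x / Real.log x))
      Filter.atTop (nhds 1)) :
    Filter.Tendsto (fun n : ℕ => (Nat.nth Nat.Prime (n - 1) : ℝ) / (n * Real.log n))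
      Filter.atTop (nhds 1) := by
  set p : ℕ → ℝ := fun n => (Nat.nth Nat.Prime (n - 1) : ℝ)
  have hp : Tendsto p atTop atTop := tendsto_natCast_atTop_atTop.comp <|
    (Nat.nth_strictMono Nat.infinite_setOfPred_prime).tendsto_atTop.comp (tendsto_sub_atTop_nat 1)
  have hpnt : (fun n : ℕ => (n : ℝ)) ~[atTop] fun n => p n / log (p n) := by
    refine isEquivalent_of_tendsto_one ((h.comp hp).congr' ?_)
    filter_upwards [eventually_ge_atTop 1] with n hn
    simp [p, Nat.primeCounting_nth_prime, Nat.sub_add_cancel hn]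
  have hnz : ∀ᶠ n : ℕ in atTop, (n : ℝ) * log n ≠ 0 := by
    filter_upwards [eventually_ge_atTop 2] with n hn
    have hn' : (1 : ℝ) < n := by exact_mod_cast hn
    exact mul_ne_zero (by positivity) (log_pos hn').ne'
  exact (isEquivalent_iff_tendsto_one hnz).mp (hpnt.mul_log_of_div_log hp)
end
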